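/- Let Q₀ be a J-normal projection on a Krein space (H,J) and set A₀ = P₀ − P₀^#, where P₀ = Q₀(I − Q₀^#). Then A₀² = P₀ + P₀^#, A₀³ = A₀, A₀² is a J-selfadjoint projection, and R₀ = ½(A₀² + A₀) is a projection satisfying A₀R₀ = R₀A₀ = R₀, −R₀^#A₀ = −A₀R₀^# = R₀^#, and R₀ + R₀^# = A₀². -/
import Mathlib


open ContinuousLinearMap

variable {H : Type*} [NormedAddCommGroup H] [InnerProductSpace ℂ H] [CompleteSpace H]

/-- The `J`-adjoint `T^# = J T* J`. -/
noncomputable def sharp (J T : H →L[ℂ] H) : H →L[ℂ] H :=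
  J ∘L (ContinuousLinearMap.adjoint T) ∘L J

lemma sharp_mul (J : H →L[ℂ] H) (hJ2 : J ∘L J = 1) (A B : H →L[ℂ] H) :
    sharp J (A * B) = sharp J B * sharp J A := by
  have hadj : adjoint (A * B) = adjoint B * adjoint A := by
    rw [mul_def, adjoint_comp, ← mul_def]
  rw [← mul_def] at hJ2
  simp only [sharp, ← mul_def, hadj]
  calc J * (adjoint B * adjoint A * J)
      = J * adjoint B * (J * J) * adjoint A * J := by rw [hJ2]; noncomm_ring
    _ = J * (adjoint B * J) * (J * (adjoint A * J)) := by noncomm_ring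

lemma sharp_add (J A B : H →L[ℂ] H) : sharp J (A + B) = sharp J A + sharp J B := by
  simp only [sharp, ← mul_def, map_add]; noncomm_ring

lemma sharp_sub (J A B : H →L[ℂ] H) : sharp J (A - B) = sharp J A - sharp J B := by
  simp only [sharp, ← mul_def, map_sub]; noncomm_ring

lemma sharp_one (J : H →L[ℂ] H) (hJ2 : J ∘L J = 1) : sharp J 1 = 1 := by
  have : adjoint (1 : H →L[ℂ] H) = 1 := by
    rw [one_def, adjoint_id]
  rw [← mul_def] at hJ2
  simp only [sharp, ← mul_def, this, one_mul, hJ2]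

lemma sharp_smul (J A : H →L[ℂ] H) (c : ℂ) :
    sharp J (c • A) = (starRingEnd ℂ c) • sharp J A := by
  have : adjoint (c • A) = (starRingEnd ℂ c) • adjoint A := map_smulₛₗ _ _ _
  simp only [sharp, ← mul_def, this, mul_smul_comm, smul_mul_assoc]

lemma sharp_sharp (J : H →L[ℂ] H) (hJsa : ContinuousLinearMap.adjoint J = J)
    (hJ2 : J ∘L J = 1) (A : H →L[ℂ] H) : sharp J (sharp J A) = A := by
  have h1 : adjoint (J * (adjoint A * J)) = J * A * J := by
    rw [mul_def, mul_def, adjoint_comp, adjoint_comp, hJsa, adjoint_adjoint, ← mul_def, ← mul_def]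
  rw [← mul_def] at hJ2
  simp only [sharp, ← mul_def, h1]
  calc J * (J * A * J * J) = (J*J) * A * (J*J) := by noncomm_ring
    _ = A := by rw [hJ2]; simp

/-- Algebraic properties of `A₀ = P₀ − P₀^#` and `R₀ = ½(A₀² + A₀)` for a `J`-normal
projection `Q₀` with `P₀ = Q₀(I − Q₀^#)`. -/
theorem stmt15 (J Q₀ : H →L[ℂ] H)
    (hJsa : ContinuousLinearMap.adjoint J = J) (hJ2 : J ∘L J = 1)
    (hQ₀ : Q₀ ∘L Q₀ = Q₀) (hQ₀n : Q₀ ∘L sharp J Q₀ = sharp J Q₀ ∘L Q₀)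
    (P₀ A₀ R₀ : H →L[ℂ] H)
    (hP₀ : P₀ = Q₀ ∘L (1 - sharp J Q₀))
    (hA₀ : A₀ = P₀ - sharp J P₀)
    (hR₀ : R₀ = (1 / 2 : ℂ) • (A₀ ∘L A₀ + A₀)) :
    A₀ ∘L A₀ = P₀ + sharp J P₀ ∧
    A₀ ∘L A₀ ∘L A₀ = A₀ ∧
    (A₀ ∘L A₀) ∘L (A₀ ∘L A₀) = A₀ ∘L A₀ ∧
    sharp J (A₀ ∘L A₀) = A₀ ∘L A₀ ∧
    R₀ ∘L R₀ = R₀ ∧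
    A₀ ∘L R₀ = R₀ ∧ R₀ ∘L A₀ = R₀ ∧
    -(sharp J R₀ ∘L A₀) = sharp J R₀ ∧ -(A₀ ∘L sharp J R₀) = sharp J R₀ ∧
    R₀ + sharp J R₀ = A₀ ∘L A₀ := by
  rw [← mul_def] at hQ₀ hQ₀n
  have hS2 : sharp J Q₀ * sharp J Q₀ = sharp J Q₀ := by
    rw [← sharp_mul J hJ2, hQ₀]
  have hS2' : ∀ x, sharp J Q₀ * (sharp J Q₀ * x) = sharp J Q₀ * x := fun x => by
    rw [← mul_assoc, hS2]
  have hQ2' : ∀ x, Q₀ * (Q₀ * x) = Q₀ * x := fun x => by rw [← mul_assoc, hQ₀]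
  have hc : sharp J Q₀ * Q₀ = Q₀ * sharp J Q₀ := hQ₀n.symm
  have hc' : ∀ x, sharp J Q₀ * (Q₀ * x) = Q₀ * (sharp J Q₀ * x) := fun x => by
    rw [← mul_assoc, hc, mul_assoc]
  have hP : P₀ = Q₀ - Q₀ * sharp J Q₀ := by rw [hP₀, ← mul_def]; noncomm_ring
  have hPs : sharp J P₀ = sharp J Q₀ - Q₀ * sharp J Q₀ := by
    rw [hP₀, ← mul_def, sharp_mul J hJ2, sharp_sub, sharp_one J hJ2,
      sharp_sharp J hJsa hJ2]
    noncomm_ring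
  have hPP : P₀ * P₀ = P₀ := by
    rw [hP]
    simp only [mul_sub, sub_mul, mul_assoc, hQ₀, hS2, hc, hc', hQ2', hS2']
    abel
  have hPPs : P₀ * sharp J P₀ = 0 := by
    rw [hPs, hP]
    simp only [mul_sub, sub_mul, mul_assoc, hQ₀, hS2, hc, hc', hQ2', hS2']
    abel
  have hPsP : sharp J P₀ * P₀ = 0 := by
    rw [hPs, hP]
    simp only [mul_sub, sub_mul, mul_assoc, hQ₀, hS2, hc, hc', hQ2', hS2']
    abel
  have hPsPs : sharp J P₀ * sharp J P₀ = sharp J P₀ := by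
    rw [hPs]
    simp only [mul_sub, sub_mul, mul_assoc, hQ₀, hS2, hc, hc', hQ2', hS2']
    abel
  have h2 : A₀ ∘L A₀ = P₀ + sharp J P₀ := by
    rw [← mul_def, hA₀]
    simp only [mul_sub, sub_mul, hPP, hPPs, hPsP, hPsPs]
    abel
  have hRP : R₀ = P₀ := by
    rw [hR₀, h2, hA₀]
    have : P₀ + sharp J P₀ + (P₀ - sharp J P₀) = (2 : ℂ) • P₀ := by
      rw [two_smul]; abel
    rw [this, smul_smul]
    norm_num
  have hsR : sharp J R₀ = sharp J P₀ := by
    rw [hRP]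
  refine ⟨h2, ?_, ?_, ?_, ?_, ?_, ?_, ?_, ?_, ?_⟩
  · simp only [← mul_def] at h2 ⊢
    rw [h2, hA₀]
    simp only [mul_add, add_mul, sub_mul, mul_sub, hPP, hPPs, hPsP, hPsPs]
    abel
  · rw [h2]
    rw [← mul_def]
    simp only [mul_add, add_mul, hPP, hPPs, hPsP, hPsPs]
    abel
  · rw [h2, sharp_add, sharp_sharp J hJsa hJ2, add_comm]
  · rw [hRP, ← mul_def, hPP]
  · rw [hRP, hA₀, ← mul_def, sub_mul, hPP, hPsP, sub_zero]
  · rw [hRP, hA₀, ← mul_def, mul_sub, hPP, hPPs, sub_zero]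
  · rw [hsR, hA₀, ← mul_def, mul_sub, hPsP, hPsPs, zero_sub, neg_neg]
  · rw [hsR, hA₀, ← mul_def, sub_mul, hPPs, hPsPs, zero_sub, neg_neg]
  · rw [hsR, hRP]; exact h2.symm
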